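/- arXiv:2203.04057 — 4 statements merged into one kernel-verified Lean document; each statement's English description precedes it below -/
import Mathlib

section
/- Let $(\underline{s},\underline{t})\in[p]^k\times[n]^k$ with edge multiplicity profile $(\rho_1,\ldots,\rho_{2k})$. If some edge has odd multiplicity (i.e., $\rho_\ell\geq 1$ for some odd $\ell$), then $\#V(\underline{s},\underline{t})\leq \rho_1+\cdots+\rho_{2k}$. -/
/-- Cyclic successor on `Fin k`. -/
def cycSucc {k : ℕ} (i : Fin k) : Fin k :=
  ⟨(i.val + 1) % k, Nat.mod_lt _ i.pos⟩

/-- The `2k` edge instances of the bipartite multigraph spanned by `(s,t)`: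
for each `i`, the down edge `(s i, t i)` and the up edge `(s (i+1), t i)` (cyclically). -/
def edges {p n k : ℕ} (s : Fin k → Fin p) (t : Fin k → Fin n) :
    Fin k × Bool → Fin p × Fin n :=
  fun ib => if ib.2 then (s (cycSucc ib.1), t ib.1) else (s ib.1, t ib.1)

/-- Multiplicity of the edge `e` in the multigraph spanned by `(s,t)`. -/
def mult {p n k : ℕ} (s : Fin k → Fin p) (t : Fin k → Fin n) (e : Fin p × Fin n) : ℕ :=
  (Finset.univ.filter (fun j => edges s t j = e)).card

/-- `ρ_ℓ`: the number of distinct edges of multiplicity exactly `ℓ`. -/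
def rho {p n k : ℕ} (s : Fin k → Fin p) (t : Fin k → Fin n) (l : ℕ) : ℕ :=
  ((Finset.univ.image (edges s t)).filter (fun e => mult s t e = l)).card

/-- Total number of distinct vertices: distinct S-nodes plus distinct T-nodes. -/
def numV {p n k : ℕ} (s : Fin k → Fin p) (t : Fin k → Fin n) : ℕ :=
  (Finset.univ.image s).card + (Finset.univ.image t).card

/-!
Read `s₀ t₀ s₁ t₁ ⋯ s_{k-1} t_{k-1} s₀` as a closed walk of `2k` steps. Every set of vertices is
entered as often as it is left, so every cut is crossed an even number of times. If `{a, b}` were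
a bridge, the set of vertices reachable from `a` without using `{a, b}` would be crossed exactly
by the traversals of `{a, b}`; so an edge traversed an odd number of times is not a bridge. The
walk's vertices therefore stay connected by the other `ρ₁ + ⋯ + ρ_{2k} - 1` distinct edges, and a
connected graph on `V` vertices has at least `V - 1` edges.
-/

open Finset SimpleGraph

namespace SimpleGraph

variable {α : Type*} {G : SimpleGraph α}

lemma Reachable.deleteEdges_of_not_isBridge {a b u v : α} (hab : ¬G.IsBridge s(a, b))
    (huv : G.Reachable u v) : (G.deleteEdges {s(a, b)}).Reachable u v := by
  rw [isBridge_iff, not_not] at hab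
  rw [reachable_iff_reflTransGen] at huv ⊢
  refine Relation.reflTransGen_closed (fun x y hxy => ?_) _ _ huv
  rw [← reachable_iff_reflTransGen]
  by_cases he : s(x, y) = s(a, b)
  · rcases Sym2.eq_iff.mp he with ⟨rfl, rfl⟩ | ⟨rfl, rfl⟩
    exacts [hab, hab.symm]
  · exact Adj.reachable ((deleteEdges_adj ..).mpr ⟨hxy, he⟩)

lemma card_finset_le_card_edgeSet_add_one [Finite α] {V : Finset α}
    (hV : ∀ u ∈ V, ∀ v ∈ V, G.Reachable u v) : #V ≤ Nat.card G.edgeSet + 1 := by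
  obtain rfl | ⟨u, hu⟩ := V.eq_empty_or_nonempty
  · simp
  set C := G.connectedComponentMk u
  calc #V ≤ Nat.card C.supp := by
        rw [← Nat.card_eq_finsetCard]
        exact Nat.card_mono (Set.toFinite _) fun v hv => ConnectedComponent.sound (hV v hv u hu)
    _ ≤ Nat.card C.toSimpleGraph.edgeSet + 1 :=
        C.connected_toSimpleGraph.card_vert_le_card_edgeSet_add_one
    _ ≤ Nat.card G.edgeSet + 1 := by
        gcongr
        exact Nat.card_le_card_of_injective _ (Embedding.induce C.supp).mapEdgeSet.injective

end SimpleGraph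

section StepGraph

variable {ι α : Type*} (src tgt : ι → α)

def stepGraph : SimpleGraph α := fromEdgeSet (Set.range fun i => s(src i, tgt i))

variable {src tgt}

lemma even_card_crossing [Fintype ι]
    (hbal : ∀ f : α → ℕ, ∑ i, f (src i) = ∑ i, f (tgt i)) (P : α → Prop) [DecidablePred P] :
    Even #{i | ¬(P (src i) ↔ P (tgt i))} := by
  have hpt : ∀ i, (if ¬(P (src i) ↔ P (tgt i)) then 1 else 0) +
      2 * (if P (src i) ∧ P (tgt i) then 1 else 0) =
      (if P (src i) then 1 else 0) + (if P (tgt i) then 1 else 0) := by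
    intro i
    split_ifs <;> tauto
  have hsum := congrArg (∑ i, · i) (funext hpt)
  simp only [sum_add_distrib, ← mul_sum, ← hbal fun x => if P x then 1 else 0] at hsum
  rw [card_filter]
  exact ⟨(∑ i, if P (src i) then 1 else 0) - ∑ i, if P (src i) ∧ P (tgt i) then 1 else 0,
    by omega⟩

lemma reachable_deleteEdges_of_notMem (S : Set (Sym2 α)) (i : ι) (hi : s(src i, tgt i) ∉ S) :
    ((stepGraph src tgt).deleteEdges S).Reachable (src i) (tgt i) := by
  by_cases h : src i = tgt i
  · rw [h]
  · exact Adj.reachable <|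
      (deleteEdges_adj ..).mpr ⟨(fromEdgeSet_adj _).mpr ⟨⟨i, rfl⟩, h⟩, hi⟩

lemma reachable_stepGraph (i : ι) : (stepGraph src tgt).Reachable (src i) (tgt i) := by
  simpa using reachable_deleteEdges_of_notMem (S := ∅) i (Set.notMem_empty _)

variable [Fintype ι] [DecidableEq α]

lemma not_isBridge_of_odd (hbal : ∀ f : α → ℕ, ∑ i, f (src i) = ∑ i, f (tgt i))
    {a b : α} (hodd : Odd #{i | s(src i, tgt i) = s(a, b)}) :
    ¬(stepGraph src tgt).IsBridge s(a, b) := by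
  classical
  rw [isBridge_iff]
  intro hab
  set G' := (stepGraph src tgt).deleteEdges {s(a, b)}
  have hcross : ∀ i, ¬(G'.Reachable a (src i) ↔ G'.Reachable a (tgt i)) ↔
      s(src i, tgt i) = s(a, b) := by
    refine fun i => ⟨fun h => ?_, fun h => ?_⟩
    · by_contra hi
      have := reachable_deleteEdges_of_notMem {s(a, b)} i hi
      exact h ⟨fun h' => h'.trans this, fun h' => h'.trans this.symm⟩
    · rcases Sym2.eq_iff.mp h with ⟨rfl, rfl⟩ | ⟨rfl, rfl⟩ <;> simpa using hab
  have := even_card_crossing hbal (G'.Reachable a)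
  simp only [hcross] at this
  exact Nat.not_even_iff_odd.mpr hodd this

lemma card_image_src_le_of_odd [Finite α]
    (hbal : ∀ f : α → ℕ, ∑ i, f (src i) = ∑ i, f (tgt i))
    (hconn : ∀ i j, (stepGraph src tgt).Reachable (src i) (src j))
    {a b : α} (hodd : Odd #{i | s(src i, tgt i) = s(a, b)}) :
    #(univ.image src) ≤ #(univ.image fun i => s(src i, tgt i)) := by
  set E := univ.image fun i => s(src i, tgt i)
  have hbr := not_isBridge_of_odd hbal hodd
  obtain ⟨i₀, hi₀⟩ := card_pos.mp hodd.pos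
  have hmem : s(a, b) ∈ E := mem_image.mpr ⟨i₀, mem_univ _, (mem_filter.mp hi₀).2⟩
  calc #(univ.image src)
      ≤ Nat.card ((stepGraph src tgt).deleteEdges {s(a, b)}).edgeSet + 1 := by
        refine card_finset_le_card_edgeSet_add_one ?_
        simp only [mem_image, mem_univ, true_and]
        rintro _ ⟨i, rfl⟩ _ ⟨j, rfl⟩
        exact (hconn i j).deleteEdges_of_not_isBridge hbr
    _ ≤ #(E.erase s(a, b)) + 1 := by
        gcongr
        rw [← Nat.card_eq_finsetCard]
        refine Nat.card_mono (Set.toFinite _)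
          (t := ((E.erase s(a, b) : Finset (Sym2 α)) : Set (Sym2 α))) fun e he => ?_
        rw [edgeSet_deleteEdges, stepGraph, edgeSet_fromEdgeSet] at he
        simpa [E, he.2] using he.1.1
    _ = #E := card_erase_add_one hmem

end StepGraph

def sumEdge {β γ : Type*} (e : β × γ) : Sym2 (β ⊕ γ) := s(.inl e.1, .inr e.2)

lemma sumEdge_injective {β γ : Type*} :
    Function.Injective (sumEdge : β × γ → Sym2 (β ⊕ γ)) := by
  rintro ⟨a, b⟩ ⟨a', b'⟩ h
  simpa [sumEdge] using h

lemma cycSucc_eq_finRotate (k : ℕ) : (cycSucc : Fin k → Fin k) = finRotate k := by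
  funext i
  obtain _ | m := k
  · exact i.elim0
  · ext
    simp [cycSucc, Fin.val_add]

section Walk

variable {p n k : ℕ} (s : Fin k → Fin p) (t : Fin k → Fin n)

def walkSrc : Fin k × Bool → Fin p ⊕ Fin n :=
  fun ib => if ib.2 then .inr (t ib.1) else .inl (s ib.1)

def walkTgt : Fin k × Bool → Fin p ⊕ Fin n :=
  fun ib => if ib.2 then .inl (s (cycSucc ib.1)) else .inr (t ib.1)

lemma sym2_walkSrc_walkTgt (x : Fin k × Bool) :
    s(walkSrc s t x, walkTgt s t x) = sumEdge (edges s t x) := by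
  obtain ⟨i, _ | _⟩ := x <;> simp [walkSrc, walkTgt, edges, sumEdge, Sym2.eq_swap]

lemma sum_walkSrc_eq_sum_walkTgt (f : Fin p ⊕ Fin n → ℕ) :
    ∑ x, f (walkSrc s t x) = ∑ x, f (walkTgt s t x) := by
  simp only [Fintype.sum_prod_type, Fintype.sum_bool, walkSrc, walkTgt, if_true,
    Bool.false_eq_true, if_false, sum_add_distrib, cycSucc_eq_finRotate,
    Equiv.sum_comp (finRotate k) fun i => f (.inl (s i))]
  exact add_comm _ _

lemma reachable_walkSrc (i j : Fin k × Bool) :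
    (stepGraph (walkSrc s t) (walkTgt s t)).Reachable (walkSrc s t i) (walkSrc s t j) := by
  set G := stepGraph (walkSrc s t) (walkTgt s t)
  have hk : 0 < k := i.1.pos
  have hs : ∀ m (hm : m < k), G.Reachable (.inl (s ⟨0, hk⟩)) (.inl (s ⟨m, hm⟩)) := by
    intro m hm
    induction m with
    | zero => rfl
    | succ m ih =>
      have hsucc : cycSucc (⟨m, by omega⟩ : Fin k) = ⟨m + 1, hm⟩ := by
        ext
        exact Nat.mod_eq_of_lt hm
      have h₁ : G.Reachable _ _ := reachable_stepGraph (⟨m, by omega⟩, false)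
      have h₂ : G.Reachable _ _ := reachable_stepGraph (⟨m, by omega⟩, true)
      simp only [walkSrc, walkTgt, hsucc, if_true, Bool.false_eq_true, if_false] at h₁ h₂
      exact (ih (by omega)).trans (h₁.trans h₂)
  have hsrc : ∀ x, G.Reachable (.inl (s ⟨0, hk⟩)) (walkSrc s t x) := by
    rintro ⟨m, _ | _⟩
    · exact hs m m.isLt
    · exact (hs m m.isLt).trans (reachable_stepGraph (m, false))
  exact (hsrc i).symm.trans (hsrc j)

lemma numV_le_card_image_walkSrc : numV s t ≤ #(univ.image (walkSrc s t)) := by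
  rw [numV, ← card_disjSum]
  refine card_le_card fun v hv => ?_
  simp only [mem_disjSum, mem_image, mem_univ, true_and] at hv
  rcases hv with ⟨_, ⟨i, rfl⟩, rfl⟩ | ⟨_, ⟨i, rfl⟩, rfl⟩
  exacts [mem_image_of_mem _ (mem_univ (i, false)),
    mem_image_of_mem _ (mem_univ (i, true))]

lemma card_image_sym2_walk_le :
    #(univ.image fun x => s(walkSrc s t x, walkTgt s t x)) ≤ #(univ.image (edges s t)) := by
  rw [show (univ.image fun x => s(walkSrc s t x, walkTgt s t x)) =
      (univ.image (edges s t)).image sumEdge by simp only [sym2_walkSrc_walkTgt, image_image]; rfl]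
  exact card_image_le

lemma card_filter_sym2_walk (e : Fin p × Fin n) :
    #{x | s(walkSrc s t x, walkTgt s t x) = sumEdge e} = mult s t e := by
  simp only [sym2_walkSrc_walkTgt, sumEdge_injective.eq_iff, mult]

lemma sum_rho_eq_card_image : ∑ l ∈ Icc 1 (2 * k), rho s t l = #(univ.image (edges s t)) := by
  refine (card_eq_sum_card_fiberwise fun e he => mem_Icc.mpr ⟨?_, ?_⟩).symm
  · obtain ⟨x, -, rfl⟩ := mem_image.mp he
    exact card_pos.mpr ⟨x, by simp⟩
  · calc mult s t e ≤ #(univ : Finset (Fin k × Bool)) := card_filter_le _ _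
      _ = 2 * k := by simp [mul_comm]

end Walk

/-- if some edge has odd multiplicity, then `#V(s,t) ≤ ρ₁ + ⋯ + ρ_{2k}`. -/
theorem stmt6 (p n k : ℕ) (s : Fin k → Fin p) (t : Fin k → Fin n)
    (hodd : ∃ l, Odd l ∧ 1 ≤ rho s t l) :
    numV s t ≤ ∑ l ∈ Finset.Icc 1 (2 * k), rho s t l := by
  obtain ⟨l, hl, hρ⟩ := hodd
  obtain ⟨e, he⟩ := card_pos.mp hρ
  have hcount : Odd #{x | s(walkSrc s t x, walkTgt s t x) = sumEdge e} := by
    rwa [card_filter_sym2_walk, (mem_filter.mp he).2]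
  calc numV s t ≤ #(univ.image (walkSrc s t)) := numV_le_card_image_walkSrc s t
    _ ≤ #(univ.image fun x => s(walkSrc s t x, walkTgt s t x)) :=
      card_image_src_le_of_odd (sum_walkSrc_eq_sum_walkTgt s t) (reachable_walkSrc s t) hcount
    _ ≤ #(univ.image (edges s t)) := card_image_sym2_walk_le s t
    _ = ∑ l ∈ Icc 1 (2 * k), rho s t l := (sum_rho_eq_card_image s t).symm
end

section
/- Let $(\underline{s},\underline{t})\in[p]^k\times[n]^k$ be a closed path visiting $r$ distinct rows and $c$ distinct columns, with $\ell=r+c$. If the path traverses no single edges (every edge of the associated bipartite multigraph has multiplicity at least $2$), then $2\leq\ell\leq k+1$. -/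
/-- The vertex sequence of the closed path: `s 0, t 0, s 1, t 1, …`. -/
def walk {p n k : ℕ} (hk : 0 < k) (s : Fin k → Fin p) (t : Fin k → Fin n) (j : ℕ) :
    Fin p ⊕ Fin n :=
  if j % 2 = 0 then Sum.inl (s ⟨j / 2 % k, Nat.mod_lt _ hk⟩)
  else Sum.inr (t ⟨j / 2 % k, Nat.mod_lt _ hk⟩)

/-- The edge traversed at step `j` of the walk. -/
def Estep {p n k : ℕ} (hk : 0 < k) (s : Fin k → Fin p) (t : Fin k → Fin n) (j : ℕ) :
    Fin p × Fin n :=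
  edges s t (⟨j / 2 % k, Nat.mod_lt _ hk⟩, decide (j % 2 = 1))

/-- The endpoints of the edge traversed at step `j-1` are `walk (j-1)` and `walk j`. -/
lemma key {p n k : ℕ} (hk : 0 < k) (s : Fin k → Fin p) (t : Fin k → Fin n)
    (j : ℕ) (hj : 0 < j) :
    (Sum.inl (Estep hk s t (j-1)).1 = walk hk s t (j-1) ∧
      Sum.inr (Estep hk s t (j-1)).2 = walk hk s t j) ∨
    (Sum.inl (Estep hk s t (j-1)).1 = walk hk s t j ∧
      Sum.inr (Estep hk s t (j-1)).2 = walk hk s t (j-1)) := by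
  rcases Nat.even_or_odd j with ⟨i, hi⟩ | ⟨i, hi⟩
  · -- j even, j = 2(m+1), j - 1 = 2m+1
    right
    obtain ⟨m, rfl⟩ : ∃ m, i = m + 1 := ⟨i - 1, by omega⟩
    have h1 : j - 1 = 2 * m + 1 := by omega
    have h2 : j = 2 * m + 2 := by omega
    have hd1 : (2 * m + 1) / 2 = m := by omega
    have hm1 : (2 * m + 1) % 2 = 1 := by omega
    have hd2 : (2 * m + 2) / 2 = m + 1 := by omega
    have hm2 : (2 * m + 2) % 2 = 0 := by omega
    subst h2
    rw [h1]
    constructor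
    · simp only [walk, Estep, edges, cycSucc, hd1, hm1, hd2, hm2]
      simp [Nat.mod_add_mod]
    · simp only [walk, Estep, edges, cycSucc, hd1, hm1]
      simp [Nat.mod_add_mod]
  · -- j odd, j = 2i+1, j - 1 = 2i
    left
    have h1 : j - 1 = 2 * i := by omega
    have h2 : j = 2 * i + 1 := by omega
    have hd1 : (2 * i) / 2 = i := by omega
    have hm1 : (2 * i) % 2 = 0 := by omega
    have hd2 : (2 * i + 1) / 2 = i := by omega
    have hm2 : (2 * i + 1) % 2 = 1 := by omega
    subst h2
    rw [h1]
    constructor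
    · simp only [walk, Estep, edges, hd1, hm1]
      simp [Nat.mod_add_mod]
    · simp only [walk, Estep, edges, hd1, hm1, hd2, hm2]
      simp [Nat.mod_add_mod]

/-- if the closed path `(s,t)` traverses no single edges (every edge has
multiplicity at least 2), then `2 ≤ ℓ ≤ k+1`, where `ℓ` is the total number of distinct
rows plus distinct columns visited. -/
theorem stmt10 (p n k : ℕ) (hk : 0 < k) (s : Fin k → Fin p) (t : Fin k → Fin n)
    (hns : ∀ e ∈ Finset.univ.image (edges s t), 2 ≤ mult s t e) :
    2 ≤ numV s t ∧ numV s t ≤ k + 1 := by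
  classical
  constructor
  · have h1 : 0 < (Finset.univ.image s).card :=
      Finset.card_pos.mpr ⟨s ⟨0, hk⟩, Finset.mem_image_of_mem s (Finset.mem_univ _)⟩
    have h2 : 0 < (Finset.univ.image t).card :=
      Finset.card_pos.mpr ⟨t ⟨0, hk⟩, Finset.mem_image_of_mem t (Finset.mem_univ _)⟩
    unfold numV; omega
  · set w : ℕ → Fin p ⊕ Fin n := walk hk s t with hwdef
    set W := (Finset.range (2*k)).image w with hWdef
    set E := Finset.univ.image (edges s t) with hEdef
    -- W.card = numV s t
    have himg : W = (Finset.univ.image s).image Sum.inl ∪ (Finset.univ.image t).image Sum.inr := by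
      ext v
      simp only [hWdef, Finset.mem_image, Finset.mem_union, Finset.mem_range, Finset.mem_univ,
        true_and, exists_exists_eq_and]
      constructor
      · rintro ⟨j, hj, rfl⟩
        by_cases hpar : j % 2 = 0
        · left
          exact ⟨⟨j / 2 % k, Nat.mod_lt _ hk⟩, by simp [hwdef, walk, hpar]⟩
        · right
          exact ⟨⟨j / 2 % k, Nat.mod_lt _ hk⟩, by simp [hwdef, walk, hpar]⟩
      · rintro (⟨i, rfl⟩ | ⟨i, rfl⟩)
        · refine ⟨2 * i.val, by omega, ?_⟩
          have h1 : (2 * i.val) % 2 = 0 := by omega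
          have h2 : (2 * i.val) / 2 = i.val := by omega
          simp [hwdef, walk, h1, h2, Nat.mod_eq_of_lt i.isLt]
        · refine ⟨2 * i.val + 1, by omega, ?_⟩
          have h1 : (2 * i.val + 1) % 2 = 1 := by omega
          have h2 : (2 * i.val + 1) / 2 = i.val := by omega
          simp [hwdef, walk, h1, h2, Nat.mod_eq_of_lt i.isLt]
    have hWcard : W.card = numV s t := by
      rw [himg, Finset.card_union_of_disjoint, Finset.card_image_of_injective _ Sum.inl_injective,
        Finset.card_image_of_injective _ Sum.inr_injective]
      · rfl
      · simp [Finset.disjoint_left]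
    -- E.card ≤ k
    have hEcard : E.card ≤ k := by
      have hsum : ∑ e ∈ E, mult s t e = 2 * k := by
        have h := Finset.card_eq_sum_card_image (edges s t) (Finset.univ : Finset (Fin k × Bool))
        have hcu : (Finset.univ : Finset (Fin k × Bool)).card = 2 * k := by
          simp [Finset.card_univ, mul_comm]
        rw [hcu] at h
        rw [hEdef]
        exact h.symm
      have h2 : 2 * E.card ≤ ∑ e ∈ E, mult s t e := by
        calc 2 * E.card = ∑ _e ∈ E, 2 := by rw [Finset.sum_const, smul_eq_mul, mul_comm]
        _ ≤ ∑ e ∈ E, mult s t e := Finset.sum_le_sum (fun e he => hns e he)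
      omega
    -- first occurrence
    set F : (Fin p ⊕ Fin n) → ℕ := fun v => sInf {j | w j = v} with hFdef
    have hFmem : ∀ v ∈ W, w (F v) = v := by
      intro v hv
      obtain ⟨j, _, rfl⟩ := Finset.mem_image.mp hv
      have hne : {m | w m = w j}.Nonempty := ⟨j, rfl⟩
      exact Nat.sInf_mem hne
    have hFmin : ∀ v, ∀ m, m < F v → w m ≠ v := fun v m hm => Nat.notMem_of_lt_sInf hm
    have hw0 : w 0 ∈ W := Finset.mem_image.mpr ⟨0, Finset.mem_range.mpr (by omega), rfl⟩
    set g : (Fin p ⊕ Fin n) → Fin p × Fin n := fun v => Estep hk s t (F v - 1) with hgdef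
    have hFpos : ∀ v ∈ W.erase (w 0), 0 < F v := by
      intro v hv
      rcases Nat.eq_zero_or_pos (F v) with h | h
      swap
      · exact h
      · exfalso
        have := hFmem v (Finset.mem_of_mem_erase hv)
        rw [h] at this
        exact Finset.ne_of_mem_erase hv this.symm
    have main : ∀ v ∈ W.erase (w 0), ∀ v' ∈ W.erase (w 0),
        g v = g v' → F v < F v' → False := by
      intro v hv v' hv' heq hlt
      have hv0 := hFpos v hv
      have hv'0 := hFpos v' hv'
      have hwv : w (F v) = v := hFmem v (Finset.mem_of_mem_erase hv)
      have hwv' : w (F v') = v' := hFmem v' (Finset.mem_of_mem_erase hv')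
      have hne : v ≠ v' := by
        intro h; rw [h] at hlt; omega
      have heq' : Estep hk s t (F v - 1) = Estep hk s t (F v' - 1) := heq
      have contra : w (F v - 1) = v' → False := by
        intro h
        exact hFmin v' (F v - 1) (by omega) h
      rcases key hk s t (F v) hv0 with ⟨ha, hb⟩ | ⟨ha, hb⟩ <;>
        rcases key hk s t (F v') hv'0 with ⟨hc, hd⟩ | ⟨hc, hd⟩ <;>
        simp only [← hwdef] at ha hb hc hd
      · exact hne (by rw [← hwv, ← hb, heq', hd, hwv'])
      · exact contra (by rw [← ha, heq', hc, hwv'])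
      · exact contra (by rw [← hb, heq', hd, hwv'])
      · exact hne (by rw [← hwv, ← ha, heq', hc, hwv'])
    have hinj : Set.InjOn g (W.erase (w 0)) := by
      intro v hv v' hv' heq
      rcases lt_trichotomy (F v) (F v') with h | h | h
      · exact absurd (main v hv v' hv' heq h) (fun h => h)
      · rw [← hFmem v (Finset.mem_of_mem_erase hv), ← hFmem v' (Finset.mem_of_mem_erase hv'), h]
      · exact absurd (main v' hv' v hv heq.symm h) (fun h => h)
    have hmaps : ∀ v ∈ W.erase (w 0), g v ∈ E := by
      intro v _
      exact Finset.mem_image_of_mem _ (Finset.mem_univ _)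
    have hcard : (W.erase (w 0)).card ≤ E.card :=
      Finset.card_le_card_of_injOn g hmaps hinj
    have herase : (W.erase (w 0)).card = W.card - 1 := Finset.card_erase_of_mem hw0
    have hWpos : 0 < W.card := Finset.card_pos.mpr ⟨w 0, hw0⟩
    omega
end

section
/- Let $(\underline{s},\underline{t})\in[p]^k\times[n]^k$ be a closed path visiting $r$ distinct rows and $c$ distinct columns, with $\ell=r+c$. If $k+2\leq\ell\leq 2k$, then the associated bipartite multigraph contains at least $2\ell-2k-2\geq 2$ single edges (edges of multiplicity $1$). -/
open Finset

theorem card_image_range_succ_le_card_image_sym2_add_one {V : Type*} [DecidableEq V]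
    (v : ℕ → V) (m : ℕ) :
    #((range (m + 1)).image v) ≤ #((range m).image fun j => s(v j, v (j + 1))) + 1 := by
  induction m with
  | zero => simp
  | succ m ih =>
    rw [range_add_one (n := m + 1), image_insert]
    conv_rhs => rw [range_add_one, image_insert]
    by_cases hold : v (m + 1) ∈ (range (m + 1)).image v
    · rw [insert_eq_of_mem hold]
      exact ih.trans (by gcongr; exact subset_insert _ _)
    · have hnew : s(v m, v (m + 1)) ∉ (range m).image fun j => s(v j, v (j + 1)) := by
        simp only [mem_image, mem_range, not_exists, not_and]
        intro j hj hpair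
        have hmem : v (m + 1) ∈ s(v j, v (j + 1)) := hpair ▸ Sym2.mem_mk_right _ _
        rcases Sym2.mem_iff.mp hmem with h | h
        · exact hold (mem_image.mpr ⟨j, mem_range.mpr (by omega), h.symm⟩)
        · exact hold (mem_image.mpr ⟨j + 1, mem_range.mpr (by omega), h.symm⟩)
      rw [card_insert_of_notMem hold, card_insert_of_notMem hnew]
      omega

theorem two_mul_card_image_le_card_add_card_filter_fiber_eq_one {ι β : Type*} [DecidableEq β]
    (f : ι → β) (s : Finset ι) :
    2 * #(s.image f) ≤ #s + #{b ∈ s.image f | #{i ∈ s | f i = b} = 1} := by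
  rw [card_eq_sum_card_image f s, card_filter, mul_comm, ← smul_eq_mul, ← sum_const,
    ← sum_add_distrib]
  refine sum_le_sum fun b hb => ?_
  obtain ⟨i, hi, rfl⟩ := mem_image.mp hb
  have : 0 < #{j ∈ s | f j = f i} := card_pos.mpr ⟨i, mem_filter.mpr ⟨hi, rfl⟩⟩
  split_ifs <;> omega

namespace ClosedPath

open Fin.NatCast

variable {p n k : ℕ} [NeZero k] (s : Fin k → Fin p) (t : Fin k → Fin n)

def vertex (j : ℕ) : Fin p ⊕ Fin n :=
  if j % 2 = 0 then .inl (s ((j / 2 : ℕ) : Fin k)) else .inr (t ((j / 2 : ℕ) : Fin k))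

theorem cycSucc_natCast (i : ℕ) : cycSucc (i : Fin k) = ((i + 1 : ℕ) : Fin k) := by
  ext
  simp only [cycSucc, Fin.val_natCast, Nat.mod_add_mod]

theorem vertex_pair_mem (j : ℕ) :
    s(vertex s t j, vertex s t (j + 1)) ∈
      (univ.image (edges s t)).image fun e => s(.inl e.1, .inr e.2) := by
  simp only [mem_image, mem_univ, true_and, exists_exists_eq_and]
  obtain ⟨i, rfl | rfl⟩ := Nat.even_or_odd' j
  · refine ⟨((i : Fin k), false), ?_⟩
    simp [vertex, edges, Nat.add_mod, Nat.add_div]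
  · refine ⟨((i : Fin k), true), ?_⟩
    have h₁ : (2 * i + 1) / 2 = i := by omega
    have h₂ : (2 * i + 1 + 1) / 2 = i + 1 := by omega
    simp [vertex, edges, cycSucc_natCast, Nat.add_mod, h₁, h₂, Sym2.eq_swap]

theorem disjSum_image_subset_image_vertex :
    (univ.image s).disjSum (univ.image t) ⊆ (range (2 * k + 1)).image (vertex s t) := by
  intro x hx
  simp only [mem_image, mem_range]
  rcases x with a | b
  · obtain ⟨i, -, rfl⟩ := mem_image.mp (inl_mem_disjSum.mp hx)
    exact ⟨2 * i, by omega, by simp [vertex]⟩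
  · obtain ⟨i, -, rfl⟩ := mem_image.mp (inr_mem_disjSum.mp hx)
    have h : (2 * (i : ℕ) + 1) / 2 = i := by omega
    exact ⟨2 * i + 1, by omega, by simp [vertex, Nat.add_mod, h]⟩

theorem numV_le_card_image_edges_add_one : numV s t ≤ #(univ.image (edges s t)) + 1 :=
  calc numV s t = #((univ.image s).disjSum (univ.image t)) := (card_disjSum _ _).symm
    _ ≤ #((range (2 * k + 1)).image (vertex s t)) :=
      card_le_card (disjSum_image_subset_image_vertex s t)
    _ ≤ #((range (2 * k)).image fun j => s(vertex s t j, vertex s t (j + 1))) + 1 :=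
      card_image_range_succ_le_card_image_sym2_add_one _ _
    _ ≤ #((univ.image (edges s t)).image fun e => s(Sum.inl e.1, Sum.inr e.2)) + 1 := by
      gcongr
      exact image_subset_iff.mpr fun j _ => vertex_pair_mem s t j
    _ ≤ #(univ.image (edges s t)) + 1 := by gcongr; exact card_image_le

end ClosedPath

theorem two_mul_card_image_edges_le {p n k : ℕ} (s : Fin k → Fin p) (t : Fin k → Fin n) :
    2 * #(univ.image (edges s t)) ≤ 2 * k + rho s t 1 := by
  have h := two_mul_card_image_le_card_add_card_filter_fiber_eq_one (edges s t) univ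
  rwa [card_univ, Fintype.card_prod, Fintype.card_fin, Fintype.card_bool, mul_comm k] at h

theorem stmt11_general (p n k : ℕ) (s : Fin k → Fin p) (t : Fin k → Fin n)
    (h1 : k + 2 ≤ numV s t) :
    (2 : ℤ) ≤ 2 * (numV s t : ℤ) - 2 * k - 2 ∧
    2 * (numV s t : ℤ) - 2 * k - 2 ≤
      (((Finset.univ.image (edges s t)).filter (fun e => mult s t e = 1)).card : ℤ) := by
  have : NeZero k := ⟨by rintro rfl; simp [numV] at h1⟩
  have hV := ClosedPath.numV_le_card_image_edges_add_one s t
  have hE := two_mul_card_image_edges_le s t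
  change _ ∧ _ ≤ (rho s t 1 : ℤ)
  omega

/-- if `k+2 ≤ ℓ ≤ 2k`, then the bipartite multigraph of `(s,t)` contains at
least `2ℓ - 2k - 2 ≥ 2` single edges (edges of multiplicity 1). -/
theorem stmt11 (p n k : ℕ) (s : Fin k → Fin p) (t : Fin k → Fin n)
    (h1 : k + 2 ≤ numV s t) (h2 : numV s t ≤ 2 * k) :
    (2 : ℤ) ≤ 2 * (numV s t : ℤ) - 2 * k - 2 ∧
    2 * (numV s t : ℤ) - 2 * k - 2 ≤
      (((Finset.univ.image (edges s t)).filter (fun e => mult s t e = 1)).card : ℤ) :=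
  stmt11_general p n k s t h1
end

section
/- Let $(\underline{s},\underline{t})\in[p]^k\times[n]^k$ be a closed path visiting $\ell$ distinct vertices total (rows plus columns) whose bipartite multigraph has exactly $s\geq 1$ single edges. Then the multigraph has at least $3\ell-2s-2k-3$ distinct edges of multiplicity exactly $2$. -/
/-- if the bipartite multigraph of `(s,t)` has exactly `σ ≥ 1` single edges and
`ℓ` distinct vertices in total, then it has at least `3ℓ - 2σ - 2k - 3` distinct double edges. -/
theorem stmt12 (p n k : ℕ) (s : Fin k → Fin p) (t : Fin k → Fin n) (σ : ℕ) (hσ : 1 ≤ σ)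
    (hs : ((Finset.univ.image (edges s t)).filter (fun e => mult s t e = 1)).card = σ) :
    3 * (numV s t : ℤ) - 2 * (σ : ℤ) - 2 * k - 3 ≤
      (((Finset.univ.image (edges s t)).filter (fun e => mult s t e = 2)).card : ℤ) := by
  simp only [numV]
  classical
  set D := Finset.univ.image (edges s t) with hDdef
  have hk : 0 < k := by
    rcases Nat.eq_zero_or_pos k with hk0 | hk
    · subst hk0
      simp [hDdef] at hs
      omega
    · exact hk
  set m : ℕ → Fin k := fun j => ⟨(j / 2) % k, Nat.mod_lt _ hk⟩ with hm
  set u : ℕ → Fin p ⊕ Fin n := fun j =>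
    if j % 2 = 0 then Sum.inl (s (m j)) else Sum.inr (t (m j)) with hu
  set E : ℕ → Fin p × Fin n := fun j =>
    if j % 2 = 0 then (s (m j), t (m j)) else (s (cycSucc (m j)), t (m j)) with hE
  have hED : ∀ j, E j ∈ D := by
    intro j
    rcases Nat.even_or_odd j with ⟨i, hi⟩ | ⟨i, hi⟩
    · have h0 : j % 2 = 0 := by omega
      refine Finset.mem_image.mpr ⟨(m j, false), Finset.mem_univ _, ?_⟩
      simp [hE, h0, edges]
    · have h0 : j % 2 = 1 := by omega
      refine Finset.mem_image.mpr ⟨(m j, true), Finset.mem_univ _, ?_⟩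
      simp [hE, h0, edges]
  have hend : ∀ j, (u j = Sum.inl (E j).1 ∧ u (j+1) = Sum.inr (E j).2) ∨
      (u j = Sum.inr (E j).2 ∧ u (j+1) = Sum.inl (E j).1) := by
    intro j
    rcases Nat.even_or_odd j with ⟨i, hi⟩ | ⟨i, hi⟩
    · left
      have h0 : j % 2 = 0 := by omega
      have h1 : (j+1) % 2 = 1 := by omega
      have h2 : (j+1)/2 = j/2 := by omega
      constructor
      · simp [hu, hE, h0]
      · simp [hu, hE, hm, h0, h1, h2]
    · right
      have h0 : j % 2 = 1 := by omega
      have h1 : (j+1) % 2 = 0 := by omega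
      have h2 : (j+1)/2 = j/2 + 1 := by omega
      have h3 : m (j+1) = cycSucc (m j) := by
        apply Fin.ext
        simp only [hm, cycSucc, h2]
        conv_lhs => rw [Nat.add_mod]
        conv_rhs => rw [Nat.add_mod, Nat.mod_mod_of_dvd _ (dvd_refl k)]
      constructor
      · simp [hu, hE, h0]
      · have hx : u (j+1) = Sum.inl (s (m (j+1))) := by simp [hu, h1]
        rw [hx, h3]
        simp [hE, h0]
  set V := (Finset.univ.image (fun i => (Sum.inl (s i) : Fin p ⊕ Fin n))) ∪
      (Finset.univ.image (fun i => (Sum.inr (t i) : Fin p ⊕ Fin n))) with hVdef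
  have hvisit : ∀ v ∈ V, ∃ j, u j = v := by
    intro v hv
    rcases Finset.mem_union.mp hv with h | h
    · obtain ⟨i, _, hi⟩ := Finset.mem_image.mp h
      refine ⟨2 * i.val, ?_⟩
      have h0 : (2 * i.val) % 2 = 0 := by omega
      have h1 : (2 * i.val) / 2 = i.val := by omega
      have h2 : m (2 * i.val) = i := by
        apply Fin.ext; simp [hm, h1, Nat.mod_eq_of_lt i.isLt]
      simp [hu, h0, h2, hi]
    · obtain ⟨i, _, hi⟩ := Finset.mem_image.mp h
      refine ⟨2 * i.val + 1, ?_⟩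
      have h0 : (2 * i.val + 1) % 2 = 1 := by omega
      have h1 : (2 * i.val + 1) / 2 = i.val := by omega
      have h2 : m (2 * i.val + 1) = i := by
        apply Fin.ext; simp [hm, h1, Nat.mod_eq_of_lt i.isLt]
      simp [hu, h0, h2, hi]
  have hP : ∀ v ∈ V.erase (u 0), ∃ j, u (j + 1) = v := by
    intro v hv
    obtain ⟨hne, hvV⟩ := Finset.mem_erase.mp hv
    obtain ⟨j, hj⟩ := hvisit v hvV
    cases j with
    | zero => exact absurd hj.symm hne
    | succ j => exact ⟨j, hj⟩
  set F : (Fin p ⊕ Fin n) → Fin p × Fin n :=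
    fun v => if h : ∃ j, u (j + 1) = v then E (Nat.find h) else E 0 with hFdef
  have hcard : V.card ≤ D.card + 1 := by
    have h00 : (0:ℕ) % 2 = 0 := by omega
    have hu0 : u 0 ∈ V := by
      apply Finset.mem_union_left
      exact Finset.mem_image.mpr ⟨m 0, Finset.mem_univ _, by simp [hu, h00]⟩
    have hle : (V.erase (u 0)).card ≤ D.card := by
      apply Finset.card_le_card_of_injOn F
      · intro v hv
        have hv' := hP v hv
        simp only [hFdef]
        rw [dif_pos hv']
        exact hED _
      · intro v hv w hw hF
        by_contra hne
        have hv' := hP v hv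
        have hw' := hP w hw
        simp only [hFdef] at hF
        rw [dif_pos hv', dif_pos hw'] at hF
        set jv := Nat.find hv' with hjv
        set jw := Nat.find hw' with hjw
        have hv1 : u (jv + 1) = v := Nat.find_spec hv'
        have hw1 : u (jw + 1) = w := Nat.find_spec hw'
        have hvw : u jv = w ∧ u jw = v := by
          rcases hend jv with ⟨ha, hb⟩ | ⟨ha, hb⟩ <;> rcases hend jw with ⟨hc, hd⟩ | ⟨hc, hd⟩
          · exact absurd (by rw [← hv1, ← hw1, hb, hd, hF]) hne
          · exact ⟨by rw [ha, hF, ← hd, hw1], by rw [hc, ← hF, ← hb, hv1]⟩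
          · exact ⟨by rw [ha, hF, ← hd, hw1], by rw [hc, ← hF, ← hb, hv1]⟩
          · exact absurd (by rw [← hv1, ← hw1, hb, hd, hF]) hne
        obtain ⟨huv, huw⟩ := hvw
        have hwne : w ≠ u 0 := (Finset.mem_erase.mp hw).1
        have hvne : v ≠ u 0 := (Finset.mem_erase.mp hv).1
        have h1 : jw < jv := by
          rcases Nat.eq_zero_or_pos jv with h | h
          · exact absurd (by rw [← huv, h]) hwne.symm
          · have : jw ≤ jv - 1 := Nat.find_min' hw' (by rw [Nat.sub_add_cancel h]; exact huv)
            omega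
        have h2 : jv < jw := by
          rcases Nat.eq_zero_or_pos jw with h | h
          · exact absurd (by rw [← huw, h]) hvne.symm
          · have : jv ≤ jw - 1 := Nat.find_min' hv' (by rw [Nat.sub_add_cancel h]; exact huw)
            omega
        omega
    have := Finset.card_erase_of_mem hu0
    have hpos : 1 ≤ V.card := Finset.card_pos.mpr ⟨u 0, hu0⟩
    omega
  have hVcard : (Finset.univ.image s).card + (Finset.univ.image t).card = V.card := by
    have hdis : Disjoint (Finset.univ.image (fun i => (Sum.inl (s i) : Fin p ⊕ Fin n)))
        (Finset.univ.image (fun i => (Sum.inr (t i) : Fin p ⊕ Fin n))) := by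
      simp [Finset.disjoint_left]
    rw [hVdef, Finset.card_union_of_disjoint hdis]
    congr 1
    · rw [show (fun i => (Sum.inl (s i) : Fin p ⊕ Fin n)) = Sum.inl ∘ s from rfl,
        ← Finset.image_image, Finset.card_image_of_injective _ Sum.inl_injective]
    · rw [show (fun i => (Sum.inr (t i) : Fin p ⊕ Fin n)) = Sum.inr ∘ t from rfl,
        ← Finset.image_image, Finset.card_image_of_injective _ Sum.inr_injective]
  -- counting part
  have hsum : ∑ e ∈ D, mult s t e = 2 * k := by
    have h := Finset.card_eq_sum_card_image (edges s t) (Finset.univ : Finset (Fin k × Bool))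
    rw [Finset.card_univ] at h
    simp only [Fintype.card_prod, Fintype.card_bool, Fintype.card_fin] at h
    rw [← hDdef] at h
    simp only [mult]
    rw [mul_comm 2 k]
    exact h.symm
  have hone : ∀ e ∈ D, 1 ≤ mult s t e := by
    intro e he
    obtain ⟨j, -, hj⟩ := Finset.mem_image.mp he
    exact Finset.card_pos.mpr ⟨j, Finset.mem_filter.mpr ⟨Finset.mem_univ _, hj⟩⟩
  have h3D : 3 * D.card ≤ 2 * k + (2 * σ + (D.filter (fun e => mult s t e = 2)).card) := by
    have hpt : ∀ e ∈ D, 3 ≤ mult s t e +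
        ((if mult s t e = 1 then 2 else 0) + (if mult s t e = 2 then 1 else 0)) := by
      intro e he
      have := hone e he
      split_ifs <;> omega
    have hsum2 : ∑ e ∈ D, (mult s t e +
        ((if mult s t e = 1 then 2 else 0) + (if mult s t e = 2 then 1 else 0)))
        = 2 * k + (2 * σ + (D.filter (fun e => mult s t e = 2)).card) := by
      rw [Finset.sum_add_distrib, hsum, Finset.sum_add_distrib]
      congr 1
      congr 1
      · rw [Finset.sum_ite, Finset.sum_const, Finset.sum_const, smul_eq_mul, smul_eq_mul, hs]
        omega
      · rw [Finset.sum_ite, Finset.sum_const, Finset.sum_const, smul_eq_mul, smul_eq_mul]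
        omega
    calc 3 * D.card = ∑ e ∈ D, 3 := by rw [Finset.sum_const, smul_eq_mul, mul_comm]
      _ ≤ _ := Finset.sum_le_sum hpt
      _ = _ := hsum2
  rw [← hVcard] at hcard
  omega
end
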